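/- Let G : Z × Z → ℝ≥0 be a bounded nonnegative symmetric function satisfying the triangle inequality in the appropriate sense, and let T : M → M be an operator on bounded pseudometrics of the form T(d)(z,z') = G(z,z') + c·E_γ(z,z')[d], where 0 ≤ c < 1, γ(z,z') is a fixed probability coupling depending on (z,z'), and E_γ(z,z')[d] denotes the expectation of d under this coupling. Then T is a contraction with Lipschitz constant c in the sup-norm on bounded pseudometrics, and hence has a unique fixed point. -/

import Mathlib

open MeasureTheory ProbabilityTheory Filter

/-! Write `P` for the averaging operator `P d (p) = ∫ d dκ(p)` of the kernel, so that
`T d = G + c • P d`. Since `P` is linear and does not increase sup-norms, `T` is a `c`-contraction,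
which already forces uniqueness of bounded fixed points: their difference `δ` satisfies
`‖δ‖ ≤ cⁿ ‖δ‖` for all `n`. The fixed point is the Neumann series `∑ cⁿ Pⁿ G`, which converges
uniformly because `‖Pⁿ G‖ ≤ ‖G‖`; dominated convergence lets `P` pass through the sum, and
`G + c • P (∑ cⁿ Pⁿ G) = ∑ cⁿ Pⁿ G` is then a reindexing. -/

lemma eq_zero_of_bounded_of_abs_le_mul {ι : Type*} {δ : ι → ℝ} {c : ℝ} (hc0 : 0 ≤ c)
    (hc1 : c < 1) (hδ : ∃ K, ∀ i, |δ i| ≤ K)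
    (hcontr : ∀ K, (∀ i, |δ i| ≤ K) → ∀ i, |δ i| ≤ c * K) : δ = 0 := by
  obtain ⟨K, hK⟩ := hδ
  have hpow : ∀ n i, |δ i| ≤ c ^ n * K := by
    intro n
    induction n with
    | zero => simpa using hK
    | succ n ih => simpa [pow_succ', mul_assoc] using hcontr _ ih
  have hlim : Tendsto (fun n : ℕ => c ^ n * K) atTop (nhds 0) := by
    simpa using (tendsto_pow_atTop_nhds_zero_of_lt_one hc0 hc1).mul_const K
  funext i
  exact abs_nonpos_iff.mp (ge_of_tendsto' hlim fun n => hpow n i)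

lemma hasSum_geometric_mul_const {c : ℝ} (hc0 : 0 ≤ c) (hc1 : c < 1) (C : ℝ) :
    HasSum (fun n : ℕ => c ^ n * C) (C / (1 - c)) := by
  simpa [div_eq_inv_mul, mul_comm] using (hasSum_geometric_of_lt_one hc0 hc1).mul_right C

lemma MeasureTheory.Integrable.of_measurable_of_abs_le {α : Type*} [MeasurableSpace α]
    {μ : Measure α} [IsFiniteMeasure μ] {f : α → ℝ} {C : ℝ} (hf : Measurable f)
    (hC : ∀ p, |f p| ≤ C) : Integrable f μ :=
  .of_bound hf.aestronglyMeasurable C (.of_forall fun p => (Real.norm_eq_abs (f p)).le.trans (hC p))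

namespace ProbabilityTheory.Kernel

variable {α : Type*} [MeasurableSpace α] (κ : Kernel α α)

noncomputable def average (f : α → ℝ) (p : α) : ℝ := ∫ q, f q ∂κ p

noncomputable def discountedOp (G : α → ℝ) (c : ℝ) (d : α → ℝ) (p : α) : ℝ :=
  G p + c * κ.average d p

noncomputable def discountedSum (G : α → ℝ) (c : ℝ) (p : α) : ℝ :=
  ∑' n : ℕ, c ^ n * κ.average^[n] G p

variable {κ} {f g G : α → ℝ} {c C K : ℝ}

section Measurability

variable [IsSFiniteKernel κ]

lemma measurable_average (hf : Measurable f) : Measurable (κ.average f) :=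
  (hf.comp measurable_snd).stronglyMeasurable.integral_kernel_prod_right'.measurable

lemma measurable_iterate_average (hG : Measurable G) (n : ℕ) :
    Measurable (κ.average^[n] G) := by
  induction n with
  | zero => exact hG
  | succ n ih => simpa only [Function.iterate_succ_apply'] using measurable_average ih

lemma measurable_discountedSum (hG : Measurable G) : Measurable (κ.discountedSum G c) :=
  Measurable.tsum fun n => (measurable_iterate_average hG n).const_mul _

end Measurability

variable [IsMarkovKernel κ]

lemma abs_average_le (hC : ∀ p, |f p| ≤ C) (p : α) : |κ.average f p| ≤ C := by
  simpa [average] using norm_integral_le_of_norm_le_const (μ := κ p)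
    (.of_forall fun q => (Real.norm_eq_abs (f q)).le.trans (hC q))

lemma abs_average_sub_average_le (hf : Measurable f) (hfb : ∃ C, ∀ p, |f p| ≤ C)
    (hg : Measurable g) (hgb : ∃ C, ∀ p, |g p| ≤ C) (hK : ∀ p, |f p - g p| ≤ K) (p : α) :
    |κ.average f p - κ.average g p| ≤ K := by
  obtain ⟨Cf, hCf⟩ := hfb
  obtain ⟨Cg, hCg⟩ := hgb
  have hsub : κ.average f p - κ.average g p = κ.average (f - g) p :=
    (integral_sub (.of_measurable_of_abs_le hf hCf) (.of_measurable_of_abs_le hg hCg)).symm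
  rw [hsub]
  exact abs_average_le hK p

lemma abs_discountedOp_sub_le (hc0 : 0 ≤ c) (hf : Measurable f) (hfb : ∃ C, ∀ p, |f p| ≤ C)
    (hg : Measurable g) (hgb : ∃ C, ∀ p, |g p| ≤ C) (hK : ∀ p, |f p - g p| ≤ K) (p : α) :
    |κ.discountedOp G c f p - κ.discountedOp G c g p| ≤ c * K := by
  have hsub : κ.discountedOp G c f p - κ.discountedOp G c g p =
      c * (κ.average f p - κ.average g p) := by
    simp only [discountedOp]
    ring
  rw [hsub, abs_mul, abs_of_nonneg hc0]
  exact mul_le_mul_of_nonneg_left (abs_average_sub_average_le hf hfb hg hgb hK p) hc0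

lemma abs_iterate_average_le (hC : ∀ p, |G p| ≤ C) (n : ℕ) (p : α) :
    |κ.average^[n] G p| ≤ C := by
  induction n generalizing p with
  | zero => exact hC p
  | succ n ih => simpa only [Function.iterate_succ_apply'] using abs_average_le ih p

lemma abs_pow_mul_iterate_average_le (hc0 : 0 ≤ c) (hC : ∀ p, |G p| ≤ C) (n : ℕ) (p : α) :
    ‖c ^ n * κ.average^[n] G p‖ ≤ c ^ n * C := by
  rw [Real.norm_eq_abs, abs_mul, abs_of_nonneg (pow_nonneg hc0 n)]
  exact mul_le_mul_of_nonneg_left (abs_iterate_average_le hC n p) (pow_nonneg hc0 n)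

lemma summable_discountedSum (hc0 : 0 ≤ c) (hc1 : c < 1) (hC : ∀ p, |G p| ≤ C) (p : α) :
    Summable fun n : ℕ => c ^ n * κ.average^[n] G p :=
  .of_norm_bounded (hasSum_geometric_mul_const hc0 hc1 C).summable
    (abs_pow_mul_iterate_average_le hc0 hC · p)

lemma abs_discountedSum_le (hc0 : 0 ≤ c) (hc1 : c < 1) (hC : ∀ p, |G p| ≤ C) (p : α) :
    |κ.discountedSum G c p| ≤ C / (1 - c) :=
  tsum_of_norm_bounded (hasSum_geometric_mul_const hc0 hc1 C)
    (abs_pow_mul_iterate_average_le hc0 hC · p)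

lemma average_discountedSum (hc0 : 0 ≤ c) (hc1 : c < 1) (hG : Measurable G)
    (hC : ∀ p, |G p| ≤ C) (p : α) :
    κ.average (κ.discountedSum G c) p = ∑' n : ℕ, c ^ n * κ.average^[n + 1] G p := by
  have hsum := hasSum_integral_of_dominated_convergence (μ := κ p)
    (F := fun n q => c ^ n * κ.average^[n] G q) (fun n _ => c ^ n * C)
    (fun n => ((measurable_iterate_average hG n).const_mul _).aestronglyMeasurable)
    (fun n => .of_forall (abs_pow_mul_iterate_average_le hc0 hC n))
    (.of_forall fun _ => (hasSum_geometric_mul_const hc0 hc1 C).summable) (integrable_const _)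
    (.of_forall fun q => (summable_discountedSum hc0 hc1 hC q).hasSum)
  refine hsum.tsum_eq.symm.trans (tsum_congr fun n => ?_)
  rw [integral_const_mul, Function.iterate_succ_apply']
  rfl

lemma discountedOp_discountedSum (hc0 : 0 ≤ c) (hc1 : c < 1) (hG : Measurable G)
    (hC : ∀ p, |G p| ≤ C) :
    κ.discountedOp G c (κ.discountedSum G c) = κ.discountedSum G c := by
  funext p
  rw [discountedOp, average_discountedSum hc0 hc1 hG hC, ← tsum_mul_left, discountedSum,
    (summable_discountedSum hc0 hc1 hC p).tsum_eq_zero_add]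
  simp only [pow_zero, one_mul, Function.iterate_zero_apply, pow_succ', mul_assoc]

lemma eq_discountedSum_of_discountedOp_eq (hc0 : 0 ≤ c) (hc1 : c < 1) (hG : Measurable G)
    (hC : ∀ p, |G p| ≤ C) {d : α → ℝ} (hd : Measurable d) (hdb : ∃ C, ∀ p, |d p| ≤ C)
    (hfix : κ.discountedOp G c d = d) : d = κ.discountedSum G c := by
  have hsum_bdd : ∃ C, ∀ p, |κ.discountedSum G c p| ≤ C :=
    ⟨C / (1 - c), abs_discountedSum_le hc0 hc1 hC⟩
  obtain ⟨Cd, hCd⟩ := hdb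
  have hsub_bdd : ∃ K, ∀ p, |(d - κ.discountedSum G c) p| ≤ K :=
    ⟨Cd + C / (1 - c), fun p => (abs_sub _ _).trans
      (add_le_add (hCd p) (abs_discountedSum_le hc0 hc1 hC p))⟩
  refine sub_eq_zero.mp (eq_zero_of_bounded_of_abs_le_mul hc0 hc1 hsub_bdd fun K hK p => ?_)
  simpa only [Pi.sub_apply, hfix, discountedOp_discountedSum hc0 hc1 hG hC] using
    abs_discountedOp_sub_le (κ := κ) (G := G) hc0 hd ⟨Cd, hCd⟩ (measurable_discountedSum hG)
      hsum_bdd hK p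

end ProbabilityTheory.Kernel

open ProbabilityTheory.Kernel in
theorem stmt_6_general {Z : Type*} [MeasurableSpace Z]
    (G : Z × Z → ℝ) (hGm : Measurable G) (hGb : ∃ C, ∀ p, |G p| ≤ C)
    (κ : Kernel (Z × Z) (Z × Z)) [IsMarkovKernel κ]
    (c : ℝ) (hc0 : 0 ≤ c) (hc1 : c < 1)
    (T : (Z × Z → ℝ) → Z × Z → ℝ)
    (hT : ∀ d p, T d p = G p + c * ∫ q, d q ∂(κ p)) :
    (∀ d d' (K : ℝ), (Measurable d ∧ ∃ C, ∀ p, |d p| ≤ C) →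
      (Measurable d' ∧ ∃ C, ∀ p, |d' p| ≤ C) →
      (∀ p, |d p - d' p| ≤ K) → ∀ p, |T d p - T d' p| ≤ c * K) ∧
    (∃! d : Z × Z → ℝ, (Measurable d ∧ ∃ C, ∀ p, |d p| ≤ C) ∧ T d = d) := by
  obtain rfl : T = κ.discountedOp G c := funext fun d => funext (hT d)
  obtain ⟨C, hC⟩ := hGb
  refine ⟨fun d d' K ⟨hdm, hdb⟩ ⟨hd'm, hd'b⟩ hK => abs_discountedOp_sub_le hc0 hdm hdb hd'm hd'b hK,
    κ.discountedSum G c, ?_, ?_⟩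
  · exact ⟨⟨measurable_discountedSum hGm, C / (1 - c), abs_discountedSum_le hc0 hc1 hC⟩,
      discountedOp_discountedSum hc0 hc1 hGm hC⟩
  · rintro d ⟨⟨hdm, hdb⟩, hfix⟩
    exact eq_discountedSum_of_discountedOp_eq hc0 hc1 hGm hC hdm hdb hfix

/-- The operator `T(d)(z,z') = G(z,z') + c·E_{γ(z,z')}[d]`, with `0 ≤ c < 1`, `G` a bounded
nonnegative symmetric function satisfying the triangle inequality, and `γ` a (Markov kernel
of) probability couplings, is a `c`-Lipschitz contraction in the sup-norm on bounded
measurable functions, and hence has a unique fixed point. -/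
theorem stmt_6 {Z : Type*} [MeasurableSpace Z]
    (G : Z × Z → ℝ) (hGm : Measurable G) (hGb : ∃ C, ∀ p, |G p| ≤ C)
    (hGnn : ∀ p, 0 ≤ G p) (hGsymm : ∀ x y, G (x, y) = G (y, x))
    (hGtri : ∀ x y z, G (x, z) ≤ G (x, y) + G (y, z))
    (κ : Kernel (Z × Z) (Z × Z)) [IsMarkovKernel κ]
    (c : ℝ) (hc0 : 0 ≤ c) (hc1 : c < 1)
    (T : (Z × Z → ℝ) → Z × Z → ℝ)
    (hT : ∀ d p, T d p = G p + c * ∫ q, d q ∂(κ p)) :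
    (∀ d d' (K : ℝ), (Measurable d ∧ ∃ C, ∀ p, |d p| ≤ C) →
      (Measurable d' ∧ ∃ C, ∀ p, |d' p| ≤ C) →
      (∀ p, |d p - d' p| ≤ K) → ∀ p, |T d p - T d' p| ≤ c * K) ∧
    (∃! d : Z × Z → ℝ, (Measurable d ∧ ∃ C, ∀ p, |d p| ≤ C) ∧ T d = d) :=
  stmt_6_general G hGm hGb κ c hc0 hc1 T hT
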